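/- An irrational number x ∈ (0,1) is a semi-Brjuno number if and only if B_0(x) < ∞. -/

import Mathlib

open Set Filter
open scoped ENNReal

/-- The by-excess continued fraction map `A_0(x) = ⌊1/x + 1⌋ − 1/x`. -/
noncomputable def exm (x : ℝ) : ℝ := ⌊1 / x + 1⌋ - 1 / x

/-- `bEx x n = b_{n+1} = ⌊1/A_0^n(x) + 1⌋`, the by-excess digits of `x`. -/
noncomputable def bEx (x : ℝ) (n : ℕ) : ℤ := ⌊1 / (exm^[n] x) + 1⌋

/-- `qstar x (n+1) = q*_n`, with `q*_{-1} = 0`, `q*_0 = 1` and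
`q*_n = b_n·q*_{n−1} − q*_{n−2}`. -/
noncomputable def qstar (x : ℝ) : ℕ → ℤ
  | 0 => 0
  | 1 => 1
  | n + 2 => bEx x n * qstar x (n + 1) - qstar x n

/-- The semi-Brjuno function `B_0(x) = ∑_{n≥0} β*_{n−1}·log(1/x_n) ∈ [0,∞]`
for `x ∈ (0,1)`, where `x_n = A_0^n(x)` and `β*_{n−1} = x_0⋯x_{n−1}`. -/
noncomputable def semiB (x : ℝ) : ℝ≥0∞ :=
  ∑' n : ℕ, ENNReal.ofReal ((∏ i ∈ Finset.range n, exm^[i] x) * Real.log (1 / (exm^[n] x)))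

/-!
The comparison rests on the identity `β*_{n-1} (q*_n - q*_{n-1} x_n) = 1`. Since
`0 ≤ q*_{n-1} ≤ q*_n`, it gives `1/q*_n ≤ β*_{n-1}`, and `β*_{n-1} ≤ 2/q*_n` as soon as
`x_n ≤ 1/2`, which holds whenever `log (b_{n+1} - 1) ≠ 0`. Since
`b_{n+1} - 1 ≤ 1/x_n < b_{n+1}`, the terms of the two series then agree up to a factor `2`
and an error `2 (β*_{n-1} - β*_n)`, whose sum telescopes.
-/

lemma summable_iff_tsum_ofReal_lt_top {α : Type*} {f : α → ℝ} (hf : ∀ a, 0 ≤ f a) :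
    Summable f ↔ ∑' a, ENNReal.ofReal (f a) < ⊤ := by
  refine ⟨Summable.tsum_ofReal_lt_top, fun h => ?_⟩
  exact (ENNReal.summable_toReal h.ne).congr fun a => ENNReal.toReal_ofReal (hf a)

lemma summable_sub_succ_of_antitone {f : ℕ → ℝ} (hf : Antitone f) (h0 : ∀ n, 0 ≤ f n) :
    Summable fun n => f n - f (n + 1) := by
  refine summable_of_sum_range_le (c := f 0) (fun n => sub_nonneg.2 (hf n.le_succ)) fun n => ?_
  rw [Finset.sum_range_sub']
  linarith [h0 n]

lemma log_one_div_sub_log_sub_one_le {y b : ℝ} (hy0 : 0 < y) (hy1 : y ≤ 1) (hb : 2 ≤ b)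
    (hyb : 1 / y < b) : Real.log (1 / y) - Real.log (b - 1) ≤ 2 * (1 - y) := by
  rcases le_or_gt (1 / y) 2 with hy2 | hy2
  · have hy_half : 1 / 2 ≤ y := by rw [div_le_iff₀ hy0] at hy2; linarith
    calc Real.log (1 / y) - Real.log (b - 1)
        ≤ 1 / y - 1 := by
          linarith [Real.log_le_sub_one_of_pos (one_div_pos.2 hy0),
            Real.log_nonneg (by linarith : (1 : ℝ) ≤ b - 1)]
      _ ≤ 2 * (1 - y) := by
          rw [sub_le_iff_le_add, div_le_iff₀ hy0]
          nlinarith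
  · have hy_half : y < 1 / 2 := by rw [lt_div_iff₀ hy0] at hy2; linarith
    have hratio : 1 / y / (b - 1) ≤ 2 := by
      rw [div_le_iff₀ (by linarith)]
      linarith
    rw [← Real.log_div (one_div_pos.2 hy0).ne' (by linarith)]
    calc Real.log (1 / y / (b - 1))
        ≤ Real.log 2 := Real.log_le_log (div_pos (one_div_pos.2 hy0) (by linarith)) hratio
      _ ≤ 1 := by linarith [Real.log_two_lt_d9]
      _ ≤ 2 * (1 - y) := by linarith

lemma exm_eq_one_sub_fract (y : ℝ) : exm y = 1 - Int.fract (1 / y) := by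
  rw [exm, Int.floor_add_one, Int.fract]
  push_cast
  ring

lemma exm_mem_Ioc (y : ℝ) : exm y ∈ Ioc 0 1 := by
  rw [exm_eq_one_sub_fract]
  constructor <;> linarith [Int.fract_lt_one (1 / y), Int.fract_nonneg (1 / y)]

namespace ByExcess

/-- `betaStar x n = β*_{n-1} = x_0 ⋯ x_{n-1}`. -/
noncomputable def betaStar (x : ℝ) (n : ℕ) : ℝ := ∏ i ∈ Finset.range n, exm^[i] x

lemma betaStar_succ (x : ℝ) (n : ℕ) : betaStar x (n + 1) = betaStar x n * exm^[n] x :=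
  Finset.prod_range_succ _ _

lemma one_div_iterate_exm (x : ℝ) (n : ℕ) :
    1 / exm^[n] x = (bEx x n : ℝ) - exm^[n + 1] x := by
  rw [Function.iterate_succ_apply', bEx, exm]
  ring

lemma qstar_add_two_cast (x : ℝ) (n : ℕ) :
    (qstar x (n + 2) : ℝ) = (bEx x n : ℝ) * qstar x (n + 1) - qstar x n := by
  rw [qstar]
  push_cast
  rfl

variable {x : ℝ} (hx : x ∈ Ioc 0 1)
include hx

lemma iterate_exm_mem_Ioc : ∀ n, exm^[n] x ∈ Ioc 0 1
  | 0 => hx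
  | n + 1 => by rw [Function.iterate_succ_apply']; exact exm_mem_Ioc _

lemma iterate_exm_pos (n : ℕ) : 0 < exm^[n] x := (iterate_exm_mem_Ioc hx n).1

lemma iterate_exm_le_one (n : ℕ) : exm^[n] x ≤ 1 := (iterate_exm_mem_Ioc hx n).2

lemma bEx_sub_one_le (n : ℕ) : (bEx x n : ℝ) - 1 ≤ 1 / exm^[n] x := by
  rw [one_div_iterate_exm]
  linarith [iterate_exm_le_one hx (n + 1)]

lemma one_div_lt_bEx (n : ℕ) : 1 / exm^[n] x < bEx x n := by
  rw [one_div_iterate_exm]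
  linarith [iterate_exm_pos hx (n + 1)]

lemma two_le_bEx (n : ℕ) : (2 : ℝ) ≤ bEx x n := by
  have h : 1 ≤ 1 / exm^[n] x :=
    one_le_one_div (iterate_exm_pos hx n) (iterate_exm_le_one hx n)
  have : (1 : ℤ) < bEx x n := by exact_mod_cast h.trans_lt (one_div_lt_bEx hx n)
  exact_mod_cast this

lemma qstar_nonneg_and_add_one_le (n : ℕ) :
    0 ≤ (qstar x n : ℝ) ∧ (qstar x n : ℝ) + 1 ≤ qstar x (n + 1) := by
  induction n with
  | zero => norm_num [qstar]
  | succ n ih =>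
    obtain ⟨h0, h1⟩ := ih
    refine ⟨by linarith, ?_⟩
    rw [qstar_add_two_cast]
    nlinarith [two_le_bEx hx n]

lemma qstar_succ_pos (n : ℕ) : 0 < (qstar x (n + 1) : ℝ) := by
  linarith [qstar_nonneg_and_add_one_le hx n]

lemma betaStar_pos (n : ℕ) : 0 < betaStar x n :=
  Finset.prod_pos fun i _ => iterate_exm_pos hx i

lemma betaStar_antitone : Antitone (betaStar x) := by
  refine antitone_nat_of_succ_le fun n => ?_
  rw [betaStar_succ]
  exact mul_le_of_le_one_right (betaStar_pos hx n).le (iterate_exm_le_one hx n)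

lemma betaStar_mul_qstar_sub (n : ℕ) :
    betaStar x n * ((qstar x (n + 1) : ℝ) - qstar x n * exm^[n] x) = 1 := by
  induction n with
  | zero => simp [betaStar, qstar]
  | succ n ih =>
    have hstep : exm^[n] x * ((bEx x n : ℝ) - exm^[n + 1] x) = 1 := by
      rw [← one_div_iterate_exm, mul_one_div_cancel (iterate_exm_pos hx n).ne']
    rw [betaStar_succ, qstar_add_two_cast]
    linear_combination (betaStar x n * qstar x (n + 1)) * hstep + ih

lemma one_div_qstar_le_betaStar (n : ℕ) : 1 / (qstar x (n + 1) : ℝ) ≤ betaStar x n := by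
  rw [div_le_iff₀ (qstar_succ_pos hx n)]
  have : 0 ≤ betaStar x n * qstar x n * exm^[n] x :=
    mul_nonneg (mul_nonneg (betaStar_pos hx n).le (qstar_nonneg_and_add_one_le hx n).1)
      (iterate_exm_pos hx n).le
  linarith [betaStar_mul_qstar_sub hx n]

lemma betaStar_le_two_div_qstar {n : ℕ} (hhalf : exm^[n] x ≤ 1 / 2) :
    betaStar x n ≤ 2 / (qstar x (n + 1) : ℝ) := by
  rw [le_div_iff₀ (qstar_succ_pos hx n)]
  have hβ := (betaStar_pos hx n).le
  have hq : (qstar x n : ℝ) ≤ qstar x (n + 1) := by linarith [qstar_nonneg_and_add_one_le hx n]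
  have : betaStar x n * qstar x n * exm^[n] x ≤ betaStar x n * qstar x (n + 1) * (1 / 2) :=
    mul_le_mul (mul_le_mul_of_nonneg_left hq hβ) hhalf (iterate_exm_pos hx n).le
      (mul_nonneg hβ (qstar_succ_pos hx n).le)
  linarith [betaStar_mul_qstar_sub hx n]

lemma betaStar_mul_log_bEx_le (n : ℕ) :
    betaStar x n * Real.log ((bEx x n : ℝ) - 1)
      ≤ 2 * (Real.log ((bEx x n : ℝ) - 1) / qstar x (n + 1)) := by
  rcases le_or_gt (bEx x n) 2 with hb | hb
  · have : (bEx x n : ℝ) = 2 := by exact_mod_cast le_antisymm hb (by exact_mod_cast two_le_bEx hx n)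
    simp [this, show (2 : ℝ) - 1 = 1 by norm_num]
  · have hb3 : (3 : ℝ) ≤ bEx x n := by exact_mod_cast hb
    have hhalf : exm^[n] x ≤ 1 / 2 := by
      have h2 : 2 ≤ 1 / exm^[n] x := by linarith [bEx_sub_one_le hx n]
      rw [le_div_iff₀ (iterate_exm_pos hx n)] at h2
      linarith
    calc betaStar x n * Real.log ((bEx x n : ℝ) - 1)
        ≤ 2 / qstar x (n + 1) * Real.log ((bEx x n : ℝ) - 1) :=
          mul_le_mul_of_nonneg_right (betaStar_le_two_div_qstar hx hhalf)
            (Real.log_nonneg (by linarith))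
      _ = 2 * (Real.log ((bEx x n : ℝ) - 1) / qstar x (n + 1)) := by ring

lemma log_bEx_div_qstar_nonneg (n : ℕ) :
    0 ≤ Real.log ((bEx x n : ℝ) - 1) / qstar x (n + 1) :=
  div_nonneg (Real.log_nonneg (by linarith [two_le_bEx hx n])) (qstar_succ_pos hx n).le

lemma betaStar_mul_log_nonneg (n : ℕ) : 0 ≤ betaStar x n * Real.log (1 / exm^[n] x) :=
  mul_nonneg (betaStar_pos hx n).le
    (Real.log_nonneg (one_le_one_div (iterate_exm_pos hx n) (iterate_exm_le_one hx n)))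

lemma log_bEx_div_qstar_le (n : ℕ) :
    Real.log ((bEx x n : ℝ) - 1) / qstar x (n + 1) ≤ betaStar x n * Real.log (1 / exm^[n] x) := by
  have hlog0 : 0 ≤ Real.log ((bEx x n : ℝ) - 1) := Real.log_nonneg (by linarith [two_le_bEx hx n])
  calc Real.log ((bEx x n : ℝ) - 1) / qstar x (n + 1)
      = 1 / qstar x (n + 1) * Real.log ((bEx x n : ℝ) - 1) := by ring
    _ ≤ betaStar x n * Real.log ((bEx x n : ℝ) - 1) :=
        mul_le_mul_of_nonneg_right (one_div_qstar_le_betaStar hx n) hlog0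
    _ ≤ betaStar x n * Real.log (1 / exm^[n] x) :=
        mul_le_mul_of_nonneg_left
          (Real.log_le_log (by linarith [two_le_bEx hx n]) (bEx_sub_one_le hx n))
          (betaStar_pos hx n).le

lemma betaStar_mul_log_le (n : ℕ) :
    betaStar x n * Real.log (1 / exm^[n] x)
      ≤ 2 * (Real.log ((bEx x n : ℝ) - 1) / qstar x (n + 1))
        + 2 * (betaStar x n - betaStar x (n + 1)) := by
  have herr : betaStar x n * (Real.log (1 / exm^[n] x) - Real.log ((bEx x n : ℝ) - 1))
      ≤ betaStar x n * (2 * (1 - exm^[n] x)) :=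
    mul_le_mul_of_nonneg_left
      (log_one_div_sub_log_sub_one_le (iterate_exm_pos hx n) (iterate_exm_le_one hx n)
        (two_le_bEx hx n) (one_div_lt_bEx hx n))
      (betaStar_pos hx n).le
  rw [betaStar_succ]
  linarith [betaStar_mul_log_bEx_le hx n]

lemma summable_log_bEx_div_qstar_iff :
    Summable (fun n => Real.log ((bEx x n : ℝ) - 1) / qstar x (n + 1)) ↔
      Summable (fun n => betaStar x n * Real.log (1 / exm^[n] x)) := by
  refine ⟨fun h => ?_, fun h => ?_⟩
  · have htel := summable_sub_succ_of_antitone (betaStar_antitone hx)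
      fun n => (betaStar_pos hx n).le
    exact .of_nonneg_of_le (betaStar_mul_log_nonneg hx) (betaStar_mul_log_le hx)
      ((h.mul_left 2).add (htel.mul_left 2))
  · exact .of_nonneg_of_le (log_bEx_div_qstar_nonneg hx) (log_bEx_div_qstar_le hx) h

end ByExcess

theorem semiBrjuno_iff_semiB_finite_general (x : ℝ)
    (hx : x ∈ Set.Ioo (0 : ℝ) 1) :
    Summable (fun n : ℕ => Real.log ((bEx x n : ℝ) - 1) / (qstar x (n + 1) : ℝ)) ↔
      semiB x < ⊤ := by
  have hx' : x ∈ Ioc 0 1 := Ioo_subset_Ioc_self hx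
  rw [ByExcess.summable_log_bEx_div_qstar_iff hx',
    summable_iff_tsum_ofReal_lt_top (ByExcess.betaStar_mul_log_nonneg hx')]
  rfl

/-- Proposition 2.10: an irrational `x ∈ (0,1)` is a semi-Brjuno number, i.e.
`∑_{n≥0} log(b_{n+1} − 1)/q*_n < ∞`, if and only if `B_0(x) < ∞`. -/
theorem semiBrjuno_iff_semiB_finite (x : ℝ) (hirr : Irrational x)
    (hx : x ∈ Set.Ioo (0 : ℝ) 1) :
    Summable (fun n : ℕ => Real.log ((bEx x n : ℝ) - 1) / (qstar x (n + 1) : ℝ)) ↔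
      semiB x < ⊤ :=
  semiBrjuno_iff_semiB_finite_general x hx
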